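/- Let d ≥ 1 and k ≥ 1, and let Φ be a Hermiticity-preserving linear map on the d×d complex matrices. Then Φ is k-positive if and only if Tr(C_Φ · C_Ψ) ≥ 0 for every k-superpositive linear map Ψ on d×d matrices, where C_Φ and C_Ψ denote Choi matrices. -/

import Mathlib

/-!
The Choi matrix of `Ad_a` is `v̄ v̄*` for the row-major vectorization `v` of `a`, so
`Tr(C_Φ C_{Ad_a})` is the quadratic form of `C_Φ` at `v̄`. A matrix has rank at most `k` iff it
is `Wᵀ X̄` for some `k × d` matrices `W`, `X`, and
`(id ⊗ Φ)(w w*) = (W ⊗ 1) C_Φ (W ⊗ 1)*` (with `w`, `x` the vectorizations of `W`, `X`) turns that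
quadratic form into `x* (id ⊗ Φ)(w w*) x`. Since positive semidefinite matrices are sums of
`w w*`, both conditions amount to the nonnegativity of these numbers; over `ℂ` a matrix with
nonnegative quadratic form is automatically Hermitian.
-/

open Matrix Kronecker
open scoped ComplexOrder

noncomputable section

abbrev Mat (d : ℕ) := Matrix (Fin d) (Fin d) ℂ

abbrev MatMap (d : ℕ) := Mat d →ₗ[ℂ] Mat d

abbrev Mat2 (d : ℕ) := Matrix (Fin d × Fin d) (Fin d × Fin d) ℂ

/-- The blockwise action of `id_I ⊗ Φ` on matrices indexed by `I × Fin d`: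
`((id ⊗ Φ) M)((i,a),(j,b))` is the `(a,b)` entry of `Φ` applied to the `(i,j)` block of `M`. -/
def tensId {d : ℕ} (I : Type) (Φ : Mat d → Mat d)
    (M : Matrix (I × Fin d) (I × Fin d) ℂ) : Matrix (I × Fin d) (I × Fin d) ℂ :=
  Matrix.of fun p q => Φ (Matrix.of fun a b => M (p.1, a) (q.1, b)) p.2 q.2

/-- `Φ` is `k`-positive: `id_{Fin k} ⊗ Φ` sends PSD matrices to PSD matrices. -/
def kPositive (d k : ℕ) (Φ : Mat d → Mat d) : Prop :=
  ∀ M : Matrix (Fin k × Fin d) (Fin k × Fin d) ℂ,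
    M.PosSemidef → (tensId (Fin k) Φ M).PosSemidef

/-- `Φ` is completely positive: `k`-positive for every positive integer `k`. -/
def CompletelyPositive (d : ℕ) (Φ : Mat d → Mat d) : Prop :=
  ∀ k : ℕ, 0 < k → kPositive d k Φ

/-- `Φ` is `k`-superpositive: a finite sum of maps `Ad_{a_i} : x ↦ aᵢ* x aᵢ`
with `rank aᵢ ≤ k`. -/
def kSuperpositive (d k : ℕ) (Φ : Mat d → Mat d) : Prop :=
  ∃ (n : ℕ) (a : Fin n → Mat d),
    (∀ i, (a i).rank ≤ k) ∧ ∀ x, Φ x = ∑ i, (a i)ᴴ * x * a i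

/-- The Choi matrix of `Φ`: `C_Φ((i,a),(j,b)) = Φ(e_{ij})(a,b)`. -/
def choi {d : ℕ} (Φ : Mat d → Mat d) : Mat2 d :=
  Matrix.of fun p q => Φ (Matrix.single p.1 q.1 (1 : ℂ)) p.2 q.2

/-- `v` has Schmidt rank at most `k`: `v = ∑_{l<k} φ_l ⊗ ψ_l`. -/
def SchmidtRankLE (d k : ℕ) (v : Fin d × Fin d → ℂ) : Prop :=
  ∃ φ ψ : Fin k → Fin d → ℂ, v = fun p => ∑ l, φ l p.1 * ψ l p.2

/-- `A` is `k`-block positive: Hermitian and `⟨v, A v⟩ ≥ 0` for every `v` of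
Schmidt rank at most `k`. -/
def kBlockPositive (d k : ℕ) (A : Mat2 d) : Prop :=
  A.IsHermitian ∧ ∀ v : Fin d × Fin d → ℂ, SchmidtRankLE d k v → 0 ≤ star v ⬝ᵥ A *ᵥ v

/-- `b` is `k`-separable: a finite sum of rank-one matrices `v v*` with `v` of
Schmidt rank at most `k`. -/
def kSeparable (d k : ℕ) (b : Mat2 d) : Prop :=
  ∃ (n : ℕ) (v : Fin n → (Fin d × Fin d → ℂ)),
    (∀ i, SchmidtRankLE d k (v i)) ∧ b = ∑ i, Matrix.vecMulVec (v i) (star (v i))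

/-- `Φ` preserves Hermiticity. -/
def HermPreserving (d : ℕ) (Φ : Mat d → Mat d) : Prop :=
  ∀ x : Mat d, x.IsHermitian → (Φ x).IsHermitian

/-- The map `Ad_a : x ↦ a* x a`. -/
def adFun {d : ℕ} (a : Mat d) : Mat d → Mat d := fun x => aᴴ * x * a

/-- Elementary tensor of two vectors: `(φ ⊗ ψ)(i,a) = φ(i)·ψ(a)`. -/
def tensorVec {d : ℕ} (φ ψ : Fin d → ℂ) : Fin d × Fin d → ℂ := fun p => φ p.1 * ψ p.2

/-- The unnormalized maximally entangled vector `ψ₊ = ∑ᵢ eᵢ ⊗ eᵢ`. -/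
def psiPlus (d : ℕ) : Fin d × Fin d → ℂ := fun p => if p.1 = p.2 then 1 else 0

/-- `P₊ = ψ₊ ψ₊*`. -/
def Pplus (d : ℕ) : Mat2 d := Matrix.vecMulVec (psiPlus d) (star (psiPlus d))

/-- The transpose, as a linear map on matrices. -/
def transLM (d : ℕ) : MatMap d where
  toFun x := xᵀ
  map_add' x y := by simp
  map_smul' c x := by simp

theorem Matrix.exists_eq_mul_of_rank_le {m n K : Type*} [Fintype m] [Fintype n] [DecidableEq n]
    [Field K] {A : Matrix m n K} {k : ℕ} (h : A.rank ≤ k) :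
    ∃ (B : Matrix m (Fin k) K) (C : Matrix (Fin k) n K), A = B * C := by
  set R := LinearMap.range A.mulVecLin
  obtain ⟨ι, hι⟩ := finrank_le_iff_exists_linearMap.mp
    (h.trans_eq (Module.finrank_fin_fun K).symm : Module.finrank K R ≤ _)
  obtain ⟨π, hπ⟩ := ι.exists_leftInverse_of_injective (LinearMap.ker_eq_bot.mpr hι)
  refine ⟨LinearMap.toMatrix' (R.subtype ∘ₗ π),
    LinearMap.toMatrix' (ι ∘ₗ A.mulVecLin.rangeRestrict), ?_⟩
  rw [← LinearMap.toMatrix'_comp, LinearMap.comp_assoc, ← LinearMap.comp_assoc _ ι π, hπ,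
    LinearMap.id_comp, LinearMap.subtype_comp_codRestrict, ← Matrix.toLin'_apply',
    LinearMap.toMatrix'_toLin']

theorem Matrix.posSemidef_of_forall_dotProduct_mulVec_nonneg {n : Type*} [Fintype n]
    [DecidableEq n] {A : Matrix n n ℂ} (h : ∀ x, 0 ≤ star x ⬝ᵥ A *ᵥ x) : A.PosSemidef := by
  refine .of_dotProduct_mulVec_nonneg ?_ h
  rw [← isSymmetric_toEuclideanLin_iff, LinearMap.isSymmetric_iff_inner_map_self_real]
  intro x
  have hreal := (IsSelfAdjoint.of_nonneg (h x.ofLp)).star_eq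
  rw [star_dotProduct, star_star, dotProduct_comm] at hreal
  simpa [EuclideanSpace.inner_eq_star_dotProduct, Complex.star_def] using congrArg star hreal

theorem Matrix.trace_mul_vecMulVec {n R : Type*} [Fintype n] [CommSemiring R]
    (A : Matrix n n R) (u v : n → R) : (A * vecMulVec u v).trace = v ⬝ᵥ A *ᵥ u := by
  rw [mul_vecMulVec, trace_vecMulVec, dotProduct_comm]

theorem Matrix.dotProduct_mul_mul_conjTranspose_mulVec {m n R : Type*} [Fintype m] [Fintype n]
    [CommSemiring R] [StarRing R] (K : Matrix m n R) (C : Matrix n n R) (x : m → R) :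
    star x ⬝ᵥ (K * C * Kᴴ) *ᵥ x = star (Kᴴ *ᵥ x) ⬝ᵥ C *ᵥ (Kᴴ *ᵥ x) := by
  rw [star_mulVec, conjTranspose_conjTranspose, ← mulVec_mulVec, ← mulVec_mulVec,
    dotProduct_mulVec]

theorem Matrix.kronecker_one_mulVec {l m n R : Type*} [Fintype m] [Fintype n] [DecidableEq n]
    [CommSemiring R] (A : Matrix l m R) (X : Matrix m n R) :
    (A ⊗ₖ (1 : Matrix n n R)) *ᵥ (fun p => X p.1 p.2) = fun p => (A * X) p.1 p.2 := by
  ext ⟨i, a⟩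
  simp [mulVec, dotProduct, Fintype.sum_prod_type, one_apply, Matrix.mul_apply]

section
variable {d : ℕ}

lemma apply_eq_sum_choi (Φ : MatMap d) (x : Mat d) (a b : Fin d) :
    Φ x a b = ∑ s, ∑ t, x s t * choi Φ (s, a) (t, b) := by
  have hx : x = ∑ s, ∑ t, x s t • single s t (1 : ℂ) := by
    simpa using matrix_eq_sum_single x
  conv_lhs => rw [hx]
  simp only [map_sum, map_smul, Matrix.sum_apply, Matrix.smul_apply, smul_eq_mul]
  rfl

lemma choi_adFun (a : Mat d) :
    choi (adFun a) = vecMulVec (star fun p => a p.1 p.2) (fun p => a p.1 p.2) := by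
  ext p q
  simp [choi, adFun, vecMulVec_apply, Matrix.mul_apply, Matrix.single, ite_and]

lemma choi_sum {ι : Type*} (s : Finset ι) (Ψ : ι → Mat d → Mat d) :
    choi (fun x => ∑ i ∈ s, Ψ i x) = ∑ i ∈ s, choi (Ψ i) := by
  ext p q
  simp [choi, Matrix.sum_apply]

lemma tensId_sum {I : Type} {ι : Type*} (Φ : MatMap d) (s : Finset ι)
    (M : ι → Matrix (I × Fin d) (I × Fin d) ℂ) :
    tensId I Φ (∑ r ∈ s, M r) = ∑ r ∈ s, tensId I Φ (M r) := by
  ext p q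
  have hblock : (of fun a b => ∑ r ∈ s, M r (p.1, a) (q.1, b)) =
      ∑ r ∈ s, of fun a b => M r (p.1, a) (q.1, b) := by
    ext; simp [Matrix.sum_apply]
  simp only [tensId, of_apply, Matrix.sum_apply, hblock, map_sum]

lemma tensId_vecMulVec {I : Type} [Fintype I] (Φ : MatMap d) (W : Matrix I (Fin d) ℂ) :
    tensId I Φ (vecMulVec (fun p => W p.1 p.2) (star fun p => W p.1 p.2)) =
      (W ⊗ₖ (1 : Mat d)) * choi Φ * (W ⊗ₖ (1 : Mat d))ᴴ := by
  ext p q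
  simp only [tensId, vecMulVec_apply, Pi.star_apply, RCLike.star_def, apply_eq_sum_choi, of_apply,
    Matrix.mul_apply, kroneckerMap_apply, one_apply, mul_ite, mul_one, mul_zero, ite_mul, zero_mul,
    Fintype.sum_prod_type, Finset.sum_ite_eq, Finset.mem_univ, ↓reduceIte, conjTranspose_apply,
    apply_ite (starRingEnd ℂ), map_zero, Finset.sum_mul]
  rw [Finset.sum_comm]
  refine Finset.sum_congr rfl fun s _ => Finset.sum_congr rfl fun t _ => ?_
  ring

lemma trace_choi_mul_choi_adFun {I : Type} [Fintype I] (Φ : MatMap d)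
    (W X : Matrix I (Fin d) ℂ) :
    (choi Φ * choi (adFun (Wᵀ * X.map star))).trace =
      star (fun p => X p.1 p.2) ⬝ᵥ
        tensId I Φ (vecMulVec (fun p => W p.1 p.2) (star fun p => W p.1 p.2)) *ᵥ
          (fun p => X p.1 p.2) := by
  have hconj : star (fun p : Fin d × Fin d => (Wᴴ * X) p.1 p.2) =
      fun p => (Wᵀ * X.map star) p.1 p.2 := by
    ext p; simp [Matrix.mul_apply, star_sum]
  rw [choi_adFun, trace_mul_vecMulVec, tensId_vecMulVec, dotProduct_mul_mul_conjTranspose_mulVec,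
    conjTranspose_kronecker, conjTranspose_one, kronecker_one_mulVec, ← hconj, star_star]

lemma kPositive.trace_choi_mul_choi_adFun_nonneg {k : ℕ} {Φ : MatMap d} (hΦ : kPositive d k Φ)
    {a : Mat d} (ha : a.rank ≤ k) : 0 ≤ (choi Φ * choi (adFun a)).trace := by
  obtain ⟨B, C, rfl⟩ := exists_eq_mul_of_rank_le ha
  have hBC : B * C = Bᵀᵀ * (C.map star).map star := by simp [Matrix.map_map, Function.comp_def]
  rw [hBC, trace_choi_mul_choi_adFun]
  exact (hΦ _ (posSemidef_vecMulVec_self_star _)).dotProduct_mulVec_nonneg _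

lemma kPositive.trace_choi_mul_choi_nonneg {k : ℕ} {Φ Ψ : MatMap d} (hΦ : kPositive d k Φ)
    (hΨ : kSuperpositive d k Ψ) : 0 ≤ (choi Φ * choi Ψ).trace := by
  obtain ⟨n, a, ha, hΨ⟩ := hΨ
  rw [show ⇑Ψ = fun x => ∑ i, adFun (a i) x from funext hΨ, choi_sum, Matrix.mul_sum, trace_sum]
  exact Finset.sum_nonneg fun i _ => hΦ.trace_choi_mul_choi_adFun_nonneg (ha i)

lemma kPositive_of_forall_trace_choi_mul_choi_adFun_nonneg {k : ℕ} {Φ : MatMap d}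
    (h : ∀ a : Mat d, a.rank ≤ k → 0 ≤ (choi Φ * choi (adFun a)).trace) : kPositive d k Φ := by
  intro M hM
  obtain ⟨n, v, rfl⟩ := posSemidef_iff_eq_sum_vecMulVec.mp hM
  refine posSemidef_of_forall_dotProduct_mulVec_nonneg fun x => ?_
  rw [tensId_sum, sum_mulVec, dotProduct_sum]
  refine Finset.sum_nonneg fun r _ => ?_
  have hpair := trace_choi_mul_choi_adFun Φ (of fun i a => v r (i, a)) (of fun i a => x (i, a))
  simp only [of_apply] at hpair
  rw [← hpair]
  exact h _ ((rank_mul_le_left _ _).trans (rank_le_width _))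

end

theorem stmt8_general (d k : ℕ) (Φ : MatMap d) :
    kPositive d k ⇑Φ ↔
      ∀ Ψ : MatMap d, kSuperpositive d k ⇑Ψ → 0 ≤ (choi ⇑Φ * choi ⇑Ψ).trace := by
  refine ⟨fun hΦ Ψ hΨ => hΦ.trace_choi_mul_choi_nonneg hΨ, fun h => ?_⟩
  refine kPositive_of_forall_trace_choi_mul_choi_adFun_nonneg fun a ha => ?_
  let Ad : MatMap d := LinearMap.mulLeft ℂ aᴴ ∘ₗ LinearMap.mulRight ℂ a
  have hAd : ⇑Ad = adFun a := funext fun x => (mul_assoc _ _ _).symm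
  simpa [hAd] using h Ad ⟨1, fun _ => a, fun _ => ha, fun x => by simp [hAd, adFun]⟩

/-- a Hermiticity-preserving map `Φ` is `k`-positive iff
`Tr(C_Φ C_Ψ) ≥ 0` for every `k`-superpositive map `Ψ`. -/
theorem stmt8 (d k : ℕ) (hd : 1 ≤ d) (hk : 1 ≤ k) (Φ : MatMap d)
    (hΦ : HermPreserving d ⇑Φ) :
    kPositive d k ⇑Φ ↔
      ∀ Ψ : MatMap d, kSuperpositive d k ⇑Ψ → 0 ≤ (choi ⇑Φ * choi ⇑Ψ).trace :=
  stmt8_general d k Φ
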